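/- Backward step simulation of the BPEL translation: for all BPEL activities B, states s, s', event systems Q and labels δ, if Σ ⊢ (compile B, s) —δ→ (Q, s'), then there exists a BPEL activity B' such that B at s makes a BPEL small step to B' at s' and Q = compile B'. -/
import Mathlib


namespace PiCore

/-- Event systems of the PiCore event specification language. -/
inductive EventSys (Lbl Prog St : Type) : Type where
  | basic (ev : Set (Lbl × Set St × Prog))
  | atom (ev : Set (Lbl × Set St × Prog))
  | trig (P : Prog)
  | seq (S1 S2 : EventSys Lbl Prog St)
  | choice (S1 S2 : EventSys Lbl Prog St)
  | join (S1 S2 : EventSys Lbl Prog St)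
  | iter (b : Set St) (S : EventSys Lbl Prog St)

/-- Transition kinds of event systems: anonymous τ, event entry, atomic event entry. -/
inductive TranKind (Lbl : Type) : Type where
  | tau
  | evt (l : Lbl)
  | aevt (l : Lbl)

variable {Lbl Prog St Env : Type} (K : Type)
variable (ptran : Env → Prog × St → Prog × St → Prop) (bot : Prog)

/-- Labelled small-step semantics of event systems. -/
inductive esStep (Γ : Env) :
    EventSys Lbl Prog St × St → TranKind Lbl × K → EventSys Lbl Prog St × St → Prop where
  | basicEvt {ev : Set (Lbl × Set St × Prog)} {l g P s κ}
      (h1 : (l, g, P) ∈ ev) (h2 : s ∈ g) :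
      esStep Γ (.basic ev, s) (.evt l, κ) (.trig P, s)
  | atomEvt {ev : Set (Lbl × Set St × Prog)} {l g P s t κ}
      (h1 : (l, g, P) ∈ ev) (h2 : s ∈ g)
      (h3 : Relation.ReflTransGen (fun c c' => ptran Γ c c') (P, s) (bot, t)) :
      esStep Γ (.atom ev, s) (.aevt l, κ) (.trig bot, t)
  | trigEvt {P Q s t κ} (h : ptran Γ (P, s) (Q, t)) :
      esStep Γ (.trig P, s) (.tau, κ) (.trig Q, t)
  | seqStep {S1 S1' S2 s t} {δ : TranKind Lbl × K}
      (h : esStep Γ (S1, s) δ (S1', t)) (hne : S1' ≠ .trig bot) :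
      esStep Γ (.seq S1 S2, s) δ (.seq S1' S2, t)
  | seqFin {S1 S2 s t} {δ : TranKind Lbl × K}
      (h : esStep Γ (S1, s) δ (.trig bot, t)) :
      esStep Γ (.seq S1 S2, s) δ (S2, t)
  | choice1 {S1 S2 S1' s t} {δ : TranKind Lbl × K}
      (h : esStep Γ (S1, s) δ (S1', t)) :
      esStep Γ (.choice S1 S2, s) δ (S1', t)
  | choice2 {S1 S2 S2' s t} {δ : TranKind Lbl × K}
      (h : esStep Γ (S2, s) δ (S2', t)) :
      esStep Γ (.choice S1 S2, s) δ (S2', t)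
  | join1 {S1 S2 S1' s t} {δ : TranKind Lbl × K}
      (h : esStep Γ (S1, s) δ (S1', t)) :
      esStep Γ (.join S1 S2, s) δ (.join S1' S2, t)
  | join2 {S1 S2 S2' s t} {δ : TranKind Lbl × K}
      (h : esStep Γ (S2, s) δ (S2', t)) :
      esStep Γ (.join S1 S2, s) δ (.join S1 S2', t)
  | joinFin {s κ} :
      esStep Γ (.join (.trig bot) (.trig bot), s) (.tau, κ) (.trig bot, s)
  | iterT {b S s κ} (h : s ∈ b) (hne : S ≠ .trig bot) :
      esStep Γ (.iter b S, s) (.tau, κ) (.seq S (.iter b S), s)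
  | iterF {b S s κ} (h : s ∉ b) :
      esStep Γ (.iter b S, s) (.tau, κ) (.trig bot, s)

/-- Linear computations of event systems. -/
inductive cpts (Γ : Env) : List (EventSys Lbl Prog St × St) → Prop where
  | one {S s} : cpts Γ [(S, s)]
  | env {S s t cs} (h : cpts Γ ((S, t) :: cs)) : cpts Γ ((S, s) :: (S, t) :: cs)
  | act {S1 S2 s t cs} {δ : TranKind Lbl × K}
      (h1 : esStep K ptran bot Γ (S1, s) δ (S2, t))
      (h2 : cpts Γ ((S2, t) :: cs)) : cpts Γ ((S1, s) :: (S2, t) :: cs)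

/-- Sequential lifting of a computation. -/
def liftSeq (Q : EventSys Lbl Prog St) (c : List (EventSys Lbl Prog St × St)) :
    List (EventSys Lbl Prog St × St) :=
  c.map fun p => (.seq p.1 Q, p.2)

/-- Modular computations of event systems. -/
inductive cptsM (Γ : Env) : List (EventSys Lbl Prog St × St) → Prop where
  | one {S s} : cptsM Γ [(S, s)]
  | env {S s t cs} (h : cptsM Γ ((S, t) :: cs)) : cptsM Γ ((S, s) :: (S, t) :: cs)
  | trigEvt {P Q s t cs} (h : ptran Γ (P, s) (Q, t))
      (h2 : cptsM Γ ((.trig Q, t) :: cs)) :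
      cptsM Γ ((.trig P, s) :: (.trig Q, t) :: cs)
  | basicEvt {ev : Set (Lbl × Set St × Prog)} {l g P s cs}
      (h1 : (l, g, P) ∈ ev) (h2 : s ∈ g)
      (h3 : cptsM Γ ((.trig P, s) :: cs)) :
      cptsM Γ ((.basic ev, s) :: (.trig P, s) :: cs)
  | atomEvt {ev : Set (Lbl × Set St × Prog)} {l g P s t cs}
      (h1 : (l, g, P) ∈ ev) (h2 : s ∈ g)
      (h3 : Relation.ReflTransGen (fun c c' => ptran Γ c c') (P, s) (bot, t))
      (h4 : cptsM Γ ((.trig bot, t) :: cs)) :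
      cptsM Γ ((.atom ev, s) :: (.trig bot, t) :: cs)
  | seqStep {S1 S1' S2 s t cs} {δ : TranKind Lbl × K}
      (h : esStep K ptran bot Γ (S1, s) δ (S1', t)) (hne : S1' ≠ .trig bot)
      (h2 : cptsM Γ ((.seq S1' S2, t) :: cs)) :
      cptsM Γ ((.seq S1 S2, s) :: (.seq S1' S2, t) :: cs)
  | seqFin {S1 S2 s t cs} {δ : TranKind Lbl × K}
      (h : esStep K ptran bot Γ (S1, s) δ (.trig bot, t))
      (h2 : cptsM Γ ((S2, t) :: cs)) :
      cptsM Γ ((.seq S1 S2, s) :: (S2, t) :: cs)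
  | chc1 {S1 S2 S1' s t cs} {δ : TranKind Lbl × K}
      (h : esStep K ptran bot Γ (S1, s) δ (S1', t))
      (h2 : cptsM Γ ((S1', t) :: cs)) :
      cptsM Γ ((.choice S1 S2, s) :: (S1', t) :: cs)
  | chc2 {S1 S2 S2' s t cs} {δ : TranKind Lbl × K}
      (h : esStep K ptran bot Γ (S2, s) δ (S2', t))
      (h2 : cptsM Γ ((S2', t) :: cs)) :
      cptsM Γ ((.choice S1 S2, s) :: (S2', t) :: cs)
  | join1 {S1 S2 S1' s t cs} {δ : TranKind Lbl × K}
      (h : esStep K ptran bot Γ (S1, s) δ (S1', t))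
      (h2 : cptsM Γ ((.join S1' S2, t) :: cs)) :
      cptsM Γ ((.join S1 S2, s) :: (.join S1' S2, t) :: cs)
  | join2 {S1 S2 S2' s t cs} {δ : TranKind Lbl × K}
      (h : esStep K ptran bot Γ (S2, s) δ (S2', t))
      (h2 : cptsM Γ ((.join S1 S2', t) :: cs)) :
      cptsM Γ ((.join S1 S2, s) :: (.join S1 S2', t) :: cs)
  | joinFin {s cs} (h : cptsM Γ ((.trig bot, s) :: cs)) :
      cptsM Γ ((.join (.trig bot) (.trig bot), s) :: (.trig bot, s) :: cs)
  | iterF {b S s cs} (h : s ∉ b) (h2 : cptsM Γ ((.trig bot, s) :: cs)) :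
      cptsM Γ ((.iter b S, s) :: (.trig bot, s) :: cs)
  | iterTOne {b S s cs} (h : s ∈ b) (h2 : cptsM Γ ((S, s) :: cs)) :
      cptsM Γ ((.iter b S, s) :: liftSeq (.iter b S) ((S, s) :: cs))
  | iterTMore {b S s t cs cs'} {δ : TranKind Lbl × K}
      (h : s ∈ b) (h2 : cptsM Γ ((S, s) :: cs))
      (h3 : esStep K ptran bot Γ (((S, s) :: cs).getLast (List.cons_ne_nil _ _)) δ
              (.trig bot, t))
      (h4 : cptsM Γ ((.iter b S, t) :: cs')) :
      cptsM Γ ((.iter b S, s) ::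
        (liftSeq (.iter b S) ((S, s) :: cs) ++ (.iter b S, t) :: cs'))



end PiCore

namespace BPEL

open PiCore

/-- An IMP-like program language: the terminal program ⊥, atomic state
transformations `basic f`, and sequencing. -/
inductive Imp (St : Type) : Type where
  | fin
  | basic (f : St → St)
  | seq (P Q : Imp St)

/-- The `SKIP` statement. -/
def SKIP (St : Type) : Imp St := .basic id

/-- Small-step semantics of the IMP-like language. -/
inductive impTran {St : Type} : Imp St × St → Imp St × St → Prop where
  | basic {f : St → St} {s : St} : impTran (.basic f, s) (.fin, f s)
  | seqStep {P P' Q : Imp St} {s t : St}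
      (h : impTran (P, s) (P', t)) (hne : P' ≠ .fin) :
      impTran (.seq P Q, s) (.seq P' Q, t)
  | seqFin {P Q : Imp St} {s t : St} (h : impTran (P, s) (.fin, t)) :
      impTran (.seq P Q, s) (Q, t)

/-- Flow element of a BPEL activity: optional targets (a join condition and a
list of target links) and optional sources (links with transition conditions). -/
structure FlowEle (St : Type) : Type where
  targets : Option ((St → Prop) × List String)
  sources : Option (List (String × (St → Prop)))

mutual
/-- Abstract syntax of (a core subset of) BPEL activities. -/
inductive Activity (St : Type) : Type where
  | invoke (fls : FlowEle St) (ptl ptt opn : String) (spc : St → St)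
      (cts : List (String × Activity St)) (cta : Activity St)
  | receive (fls : FlowEle St) (ptl ptt opn : String) (spc : St → St)
  | reply (fls : FlowEle St) (ptl ptt opn : String)
  | assign (fls : FlowEle St) (spc : St → St)
  | wait (fls : FlowEle St) (time : ℕ)
  | empty (fls : FlowEle St)
  | seq (A1 A2 : Activity St)
  | ifA (c : Set St) (A1 A2 : Activity St)
  | whileA (c : Set St) (A : Activity St)
  | flow (A1 A2 : Activity St)
  | pick (H1 H2 : EventHandler St)
  | fin

/-- BPEL event handlers. -/
inductive EventHandler (St : Type) : Type where
  | onMessage (ptl ptt opn : String) (spc : St → St) (A : Activity St)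
  | onAlarm (time : ℕ) (A : Activity St)
end

section Sem
variable {St : Type}
variable (tick : St → ℕ)
variable (targetsSat : Option ((St → Prop) × List String) → St → Prop)
variable (fireSources : Option (List (String × (St → Prop))) → St → St)

/-- Small-step semantics of BPEL event handlers. -/
inductive ehStep : EventHandler St → St → Activity St → St → Prop where
  | onMessage {ptl ptt opn spc A s} :
      ehStep (.onMessage ptl ptt opn spc A) s A (spc s)
  | onAlarm {time A s} (h : time > tick s) :
      ehStep (.onAlarm time A) s A s

/-- Small-step operational semantics of BPEL activities. -/
inductive bpelStep : Activity St → St → Activity St → St → Prop where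
  | invokeSuc {fls ptl ptt opn spc cts cta s}
      (h : targetsSat fls.targets s) :
      bpelStep (.invoke fls ptl ptt opn spc cts cta) s .fin
        (fireSources fls.sources (spc s))
  | invokeFault {fls ptl ptt opn spc cts cta s} {evh : Activity St}
      (h : targetsSat fls.targets s)
      (hm : evh ∈ cts.map Prod.snd ∨ evh = cta) :
      bpelStep (.invoke fls ptl ptt opn spc cts cta) s evh
        (fireSources fls.sources s)
  | receive {fls ptl ptt opn spc s} (h : targetsSat fls.targets s) :
      bpelStep (.receive fls ptl ptt opn spc) s .fin
        (fireSources fls.sources (spc s))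
  | reply {fls ptl ptt opn s} (h : targetsSat fls.targets s) :
      bpelStep (.reply fls ptl ptt opn) s .fin (fireSources fls.sources s)
  | assign {fls spc s} (h : targetsSat fls.targets s) :
      bpelStep (.assign fls spc) s .fin (fireSources fls.sources (spc s))
  | wait {fls time s} (h : targetsSat fls.targets s) (ht : time > tick s) :
      bpelStep (.wait fls time) s .fin (fireSources fls.sources s)
  | empty {fls s} (h : targetsSat fls.targets s) :
      bpelStep (.empty fls) s .fin (fireSources fls.sources s)
  | seqStep {A1 A1' A2 s t} (h : bpelStep A1 s A1' t) (hne : A1' ≠ .fin) :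
      bpelStep (.seq A1 A2) s (.seq A1' A2) t
  | seqFin {A1 A2 s t} (h : bpelStep A1 s .fin t) :
      bpelStep (.seq A1 A2) s A2 t
  | ifT {c A1 A2 s} (h : s ∈ c) : bpelStep (.ifA c A1 A2) s A1 s
  | ifF {c A1 A2 s} (h : s ∉ c) : bpelStep (.ifA c A1 A2) s A2 s
  | whileT {c A s} (h : s ∈ c) (hne : A ≠ .fin) :
      bpelStep (.whileA c A) s (.seq A (.whileA c A)) s
  | whileF {c A s} (h : s ∉ c) : bpelStep (.whileA c A) s .fin s
  | flow1 {A1 A1' A2 s t} (h : bpelStep A1 s A1' t) :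
      bpelStep (.flow A1 A2) s (.flow A1' A2) t
  | flow2 {A1 A2 A2' s t} (h : bpelStep A2 s A2' t) :
      bpelStep (.flow A1 A2) s (.flow A1 A2') t
  | flowFin {s} : bpelStep (.flow .fin .fin) s .fin s
  | pick1 {H1 H2 A s t} (h : ehStep tick H1 s A t) :
      bpelStep (.pick H1 H2) s A t
  | pick2 {H1 H2 A s t} (h : ehStep tick H2 s A t) :
      bpelStep (.pick H1 H2) s A t

end Sem

/-- Labels of events in the PiCore translation of BPEL, encoding the activity
kind and its partner-link / port-type / operation names. -/
inductive EvtLbl : Type where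
  | invoke (ptl ptt opn : String)
  | receive (ptl ptt opn : String)
  | reply (ptl ptt opn : String)
  | assign
  | wait
  | empty
  | ifT
  | ifF
  | onMessage (ptl ptt opn : String)
  | onAlarm

/-- Event systems of the BPEL translation. -/
abbrev ES (St : Type) : Type := EventSys EvtLbl (Imp St) St

/-- Nondeterministic choice of a list of event systems. -/
def chooseList {St : Type} : List (ES St) → ES St
  | [] => .trig .fin
  | [a] => a
  | a :: b :: xs => .choice a (chooseList (b :: xs))

section Compile
variable {St : Type}
variable (tick : St → ℕ)
variable (targetsSat : Option ((St → Prop) × List String) → St → Prop)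
variable (fireSources : Option (List (String × (St → Prop))) → St → St)

/-- The failure event of an `invoke` activity: it only fires the source links. -/
def failEvt (fls : FlowEle St) (ptl ptt opn : String) : ES St :=
  .atom {(EvtLbl.invoke ptl ptt opn, {s | targetsSat fls.targets s},
          Imp.basic (fireSources fls.sources))}

mutual
/-- The verified translation from BPEL activities to PiCore event systems. -/
def compile : Activity St → ES St
  | .invoke fls ptl ptt opn spc cts cta =>
      .choice
        (.atom {(EvtLbl.invoke ptl ptt opn, {s | targetsSat fls.targets s},
            Imp.seq (.basic spc) (.basic (fireSources fls.sources)))})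
        (chooseList
          (.seq (failEvt targetsSat fireSources fls ptl ptt opn) (compile cta) ::
            compileList fls ptl ptt opn cts))
  | .receive fls ptl ptt opn spc =>
      .atom {(EvtLbl.receive ptl ptt opn, {s | targetsSat fls.targets s},
          Imp.seq (.basic spc) (.basic (fireSources fls.sources)))}
  | .reply fls ptl ptt opn =>
      .atom {(EvtLbl.reply ptl ptt opn, {s | targetsSat fls.targets s},
          Imp.basic (fireSources fls.sources))}
  | .assign fls spc =>
      .atom {(EvtLbl.assign, {s | targetsSat fls.targets s},
          Imp.seq (.basic spc) (.basic (fireSources fls.sources)))}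
  | .wait fls time =>
      .atom {(EvtLbl.wait, {s | targetsSat fls.targets s ∧ time > tick s},
          Imp.basic (fireSources fls.sources))}
  | .empty fls =>
      .atom {(EvtLbl.empty, {s | targetsSat fls.targets s},
          Imp.basic (fireSources fls.sources))}
  | .seq A1 A2 => .seq (compile A1) (compile A2)
  | .ifA c A1 A2 =>
      .choice (.seq (.atom {(EvtLbl.ifT, c, SKIP St)}) (compile A1))
              (.seq (.atom {(EvtLbl.ifF, cᶜ, SKIP St)}) (compile A2))
  | .whileA c A => .iter c (compile A)
  | .flow A1 A2 => .join (compile A1) (compile A2)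
  | .pick H1 H2 => .choice (compileEH H1) (compileEH H2)
  | .fin => .trig .fin

/-- Translation of BPEL event handlers. -/
def compileEH : EventHandler St → ES St
  | .onMessage ptl ptt opn spc A =>
      .seq (.atom {(EvtLbl.onMessage ptl ptt opn, Set.univ, Imp.basic spc)})
           (compile A)
  | .onAlarm time A =>
      .seq (.atom {(EvtLbl.onAlarm, {s | time > tick s}, SKIP St)})
           (compile A)

/-- Translation of the fault handlers of an `invoke` activity. -/
def compileList (fls : FlowEle St) (ptl ptt opn : String) :
    List (String × Activity St) → List (ES St)
  | [] => []
  | (_, a) :: rest =>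
      .seq (failEvt targetsSat fireSources fls ptl ptt opn) (compile a) ::
        compileList fls ptl ptt opn rest
end

end Compile

end BPEL

section Helpers
open PiCore BPEL

variable {St : Type}
variable (tick : St → ℕ)
variable (targetsSat : Option ((St → Prop) × List String) → St → Prop)
variable (fireSources : Option (List (String × (St → Prop))) → St → St)

local notation "STEP" => esStep (Lbl := EvtLbl) (Prog := Imp St) (St := St)
    Unit (fun _ : Unit => impTran) Imp.fin ()
local notation "C" => compile tick targetsSat fireSources

lemma imp_no_fin_step {s : St} {c : Imp St × St} (h : impTran (Imp.fin, s) c) : False := by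
  cases h

lemma imp_rtg_basic {f : St → St} {s t : St}
    (h : Relation.ReflTransGen (fun c c' => impTran c c') (Imp.basic f, s) (Imp.fin, t)) :
    t = f s := by
  rcases Relation.ReflTransGen.cases_head h with h | ⟨⟨P1, s1⟩, h1, h2⟩
  · simp at h
  · cases h1
    rcases Relation.ReflTransGen.cases_head h2 with h' | ⟨c', hs, _⟩
    · simpa using h'.symm
    · exact absurd hs imp_no_fin_step

lemma imp_rtg_seq2 {f g : St → St} {s t : St}
    (h : Relation.ReflTransGen (fun c c' => impTran c c')
      (Imp.seq (.basic f) (.basic g), s) (Imp.fin, t)) :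
    t = g (f s) := by
  rcases Relation.ReflTransGen.cases_head h with h | ⟨⟨P1, s1⟩, h1, h2⟩
  · simp at h
  · cases h1 with
    | seqStep h hne => cases h; exact absurd rfl hne
    | seqFin h => cases h; exact imp_rtg_basic h2

lemma compile_eq_trig {B : Activity St} {P : Imp St}
    (h : C B = .trig P) : B = .fin := by
  cases B <;> simp [compile] at h ⊢

lemma chooseList_step {L : List (ES St)} {s s' : St} {Q : ES St}
    {δ : TranKind EvtLbl × Unit} (h : STEP (chooseList L, s) δ (Q, s')) :
    ∃ E ∈ L, STEP (E, s) δ (Q, s') := by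
  induction L with
  | nil =>
    simp only [chooseList] at h
    cases h with | trigEvt h => exact absurd h imp_no_fin_step
  | cons a L ih =>
    cases L with
    | nil => exact ⟨a, by simp, h⟩
    | cons b xs =>
      simp only [chooseList] at h
      cases h with
      | choice1 h => exact ⟨a, by simp, h⟩
      | choice2 h =>
        obtain ⟨E, hE, hs⟩ := ih h
        exact ⟨E, by simp [hE], hs⟩

lemma mem_compileList {fls : FlowEle St} {ptl ptt opn : String}
    {cts : List (String × Activity St)} {E : ES St}
    (h : E ∈ compileList tick targetsSat fireSources fls ptl ptt opn cts) :
    ∃ a ∈ cts.map Prod.snd,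
      E = .seq (failEvt targetsSat fireSources fls ptl ptt opn) (C a) := by
  induction cts with
  | nil => simp [compileList] at h
  | cons p rest ih =>
    obtain ⟨n, a⟩ := p
    simp only [compileList, List.mem_cons] at h
    rcases h with h | h
    · exact ⟨a, by simp, h⟩
    · obtain ⟨b, hb, hE⟩ := ih h
      exact ⟨b, by simp at hb ⊢; exact Or.inr hb, hE⟩

lemma fail_seq_step {fls : FlowEle St} {ptl ptt opn : String} {A : Activity St}
    {s s' : St} {Q : ES St} {δ : TranKind EvtLbl × Unit}
    (h : STEP (.seq (failEvt targetsSat fireSources fls ptl ptt opn) (C A), s) δ (Q, s')) :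
    targetsSat fls.targets s ∧ s' = fireSources fls.sources s ∧ Q = C A := by
  cases h with
  | seqStep h hne => cases h; exact absurd rfl hne
  | seqFin h =>
    cases h with
    | atomEvt h1 h2 h3 =>
      simp only [failEvt, Set.mem_singleton_iff, Prod.mk.injEq] at h1
      obtain ⟨-, hg, hP⟩ := h1
      subst hg; subst hP
      exact ⟨h2, imp_rtg_basic h3, rfl⟩

lemma compileEH_step {H : EventHandler St} {s s' : St} {Q : ES St}
    {δ : TranKind EvtLbl × Unit}
    (h : STEP (compileEH tick targetsSat fireSources H, s) δ (Q, s')) :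
    ∃ A : Activity St, ehStep tick H s A s' ∧ Q = C A := by
  cases H with
  | onMessage ptl ptt opn spc A =>
    simp only [compileEH] at h
    cases h with
    | seqStep h hne => cases h; exact absurd rfl hne
    | seqFin h =>
      cases h with
      | atomEvt h1 h2 h3 =>
        simp only [Set.mem_singleton_iff, Prod.mk.injEq] at h1
        obtain ⟨-, -, hP⟩ := h1
        subst hP
        obtain rfl := imp_rtg_basic h3
        exact ⟨A, ehStep.onMessage, rfl⟩
  | onAlarm time A =>
    simp only [compileEH] at h
    cases h with
    | seqStep h hne => cases h; exact absurd rfl hne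
    | seqFin h =>
      cases h with
      | atomEvt h1 h2 h3 =>
        simp only [Set.mem_singleton_iff, Prod.mk.injEq] at h1
        obtain ⟨-, hg, hP⟩ := h1
        subst hg; subst hP
        obtain rfl := imp_rtg_basic (f := id) h3
        exact ⟨A, ehStep.onAlarm h2, rfl⟩

end Helpers


open PiCore BPEL in
/-- **Backward step simulation of the BPEL translation:** every labelled step of
the compiled PiCore event system is matched by a BPEL small step whose target
compiles to the reached event system. -/
theorem compile_backward_simulation {St : Type}
    (tick : St → ℕ)
    (targetsSat : Option ((St → Prop) × List String) → St → Prop)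
    (fireSources : Option (List (String × (St → Prop))) → St → St) :
    ∀ (B : Activity St) (s s' : St) (Q : ES St) (δ : TranKind EvtLbl × Unit),
      esStep Unit (fun _ : Unit => impTran) Imp.fin ()
        (compile tick targetsSat fireSources B, s) δ (Q, s') →
      ∃ B' : Activity St,
        bpelStep tick targetsSat fireSources B s B' s' ∧
        Q = compile tick targetsSat fireSources B' := by
  have key : ∀ n (B : Activity St), sizeOf B = n → ∀ (s s' : St) (Q : ES St)
      (δ : TranKind EvtLbl × Unit),
      esStep Unit (fun _ : Unit => impTran) Imp.fin ()
        (compile tick targetsSat fireSources B, s) δ (Q, s') →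
      ∃ B', bpelStep tick targetsSat fireSources B s B' s' ∧
        Q = compile tick targetsSat fireSources B' := by
    intro n
    induction n using Nat.strong_induction_on with
    | _ n ih =>
    rintro B rfl s s' Q δ h
    cases B with
    | invoke fls ptl ptt opn spc cts cta =>
      simp only [compile] at h
      cases h with
      | choice1 h =>
        cases h with
        | atomEvt h1 h2 h3 =>
          simp only [Set.mem_singleton_iff, Prod.mk.injEq] at h1
          obtain ⟨-, hg, hP⟩ := h1
          subst hg; subst hP
          obtain rfl := imp_rtg_seq2 h3
          exact ⟨.fin, bpelStep.invokeSuc h2, by simp [compile]⟩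
      | choice2 h =>
        obtain ⟨E, hE, hstep⟩ := chooseList_step h
        rcases List.mem_cons.mp hE with rfl | hE
        · obtain ⟨hg, rfl, rfl⟩ := fail_seq_step tick targetsSat fireSources hstep
          exact ⟨cta, bpelStep.invokeFault hg (Or.inr rfl), rfl⟩
        · obtain ⟨a, ha, rfl⟩ := mem_compileList tick targetsSat fireSources hE
          obtain ⟨hg, rfl, rfl⟩ := fail_seq_step tick targetsSat fireSources hstep
          exact ⟨a, bpelStep.invokeFault hg (Or.inl ha), rfl⟩
    | receive fls ptl ptt opn spc =>
      simp only [compile] at h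
      cases h with
      | atomEvt h1 h2 h3 =>
        simp only [Set.mem_singleton_iff, Prod.mk.injEq] at h1
        obtain ⟨-, hg, hP⟩ := h1
        subst hg; subst hP
        obtain rfl := imp_rtg_seq2 h3
        exact ⟨.fin, bpelStep.receive h2, by simp [compile]⟩
    | reply fls ptl ptt opn =>
      simp only [compile] at h
      cases h with
      | atomEvt h1 h2 h3 =>
        simp only [Set.mem_singleton_iff, Prod.mk.injEq] at h1
        obtain ⟨-, hg, hP⟩ := h1
        subst hg; subst hP
        obtain rfl := imp_rtg_basic h3
        exact ⟨.fin, bpelStep.reply h2, by simp [compile]⟩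
    | assign fls spc =>
      simp only [compile] at h
      cases h with
      | atomEvt h1 h2 h3 =>
        simp only [Set.mem_singleton_iff, Prod.mk.injEq] at h1
        obtain ⟨-, hg, hP⟩ := h1
        subst hg; subst hP
        obtain rfl := imp_rtg_seq2 h3
        exact ⟨.fin, bpelStep.assign h2, by simp [compile]⟩
    | wait fls time =>
      simp only [compile] at h
      cases h with
      | atomEvt h1 h2 h3 =>
        simp only [Set.mem_singleton_iff, Prod.mk.injEq] at h1
        obtain ⟨-, hg, hP⟩ := h1
        subst hg; subst hP
        obtain rfl := imp_rtg_basic h3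
        exact ⟨.fin, bpelStep.wait h2.1 h2.2, by simp [compile]⟩
    | empty fls =>
      simp only [compile] at h
      cases h with
      | atomEvt h1 h2 h3 =>
        simp only [Set.mem_singleton_iff, Prod.mk.injEq] at h1
        obtain ⟨-, hg, hP⟩ := h1
        subst hg; subst hP
        obtain rfl := imp_rtg_basic h3
        exact ⟨.fin, bpelStep.empty h2, by simp [compile]⟩
    | seq A1 A2 =>
      simp only [compile] at h
      cases h with
      | seqStep h hne =>
        obtain ⟨B1', hb, rfl⟩ := ih _ (by simp <;> omega) A1 rfl s s' _ _ h
        refine ⟨.seq B1' A2, bpelStep.seqStep hb ?_, by simp [compile]⟩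
        rintro rfl
        exact hne (by simp [compile])
      | seqFin h =>
        obtain ⟨B1', hb, hq⟩ := ih _ (by simp <;> omega) A1 rfl s s' _ _ h
        obtain rfl := compile_eq_trig tick targetsSat fireSources hq.symm
        exact ⟨A2, bpelStep.seqFin hb, rfl⟩
    | ifA c A1 A2 =>
      simp only [compile] at h
      cases h with
      | choice1 h =>
        cases h with
        | seqStep h hne => cases h; exact absurd rfl hne
        | seqFin h =>
          cases h with
          | atomEvt h1 h2 h3 =>
            simp only [Set.mem_singleton_iff, Prod.mk.injEq] at h1
            obtain ⟨-, hg, hP⟩ := h1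
            subst hg; subst hP
            obtain rfl := imp_rtg_basic (f := id) h3
            exact ⟨A1, bpelStep.ifT h2, rfl⟩
      | choice2 h =>
        cases h with
        | seqStep h hne => cases h; exact absurd rfl hne
        | seqFin h =>
          cases h with
          | atomEvt h1 h2 h3 =>
            simp only [Set.mem_singleton_iff, Prod.mk.injEq] at h1
            obtain ⟨-, hg, hP⟩ := h1
            subst hg; subst hP
            obtain rfl := imp_rtg_basic (f := id) h3
            exact ⟨A2, bpelStep.ifF h2, rfl⟩
    | whileA c A =>
      simp only [compile] at h
      cases h with
      | iterT hmem hne =>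
        refine ⟨.seq A (.whileA c A), bpelStep.whileT hmem ?_, by simp [compile]⟩
        rintro rfl
        exact hne (by simp [compile])
      | iterF hmem => exact ⟨.fin, bpelStep.whileF hmem, by simp [compile]⟩
    | flow A1 A2 =>
      simp only [compile] at h
      generalize hq1 : compile tick targetsSat fireSources A1 = E1 at h
      generalize hq2 : compile tick targetsSat fireSources A2 = E2 at h
      cases h with
      | join1 h =>
        rw [← hq1] at h
        obtain ⟨B1', hb, rfl⟩ := ih _ (by simp <;> omega) A1 rfl s s' _ _ h
        exact ⟨.flow B1' A2, bpelStep.flow1 hb, by simp [compile, hq2]⟩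
      | join2 h =>
        rw [← hq2] at h
        obtain ⟨B2', hb, rfl⟩ := ih _ (by simp <;> omega) A2 rfl s s' _ _ h
        exact ⟨.flow A1 B2', bpelStep.flow2 hb, by simp [compile, hq1]⟩
      | joinFin =>
        obtain rfl := compile_eq_trig tick targetsSat fireSources hq1
        obtain rfl := compile_eq_trig tick targetsSat fireSources hq2
        exact ⟨.fin, bpelStep.flowFin, by simp [compile]⟩
    | pick H1 H2 =>
      simp only [compile] at h
      cases h with
      | choice1 h =>
        obtain ⟨A, he, rfl⟩ := compileEH_step tick targetsSat fireSources h
        exact ⟨A, bpelStep.pick1 he, rfl⟩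
      | choice2 h =>
        obtain ⟨A, he, rfl⟩ := compileEH_step tick targetsSat fireSources h
        exact ⟨A, bpelStep.pick2 he, rfl⟩
    | fin =>
      simp only [compile] at h
      cases h with
      | trigEvt h => exact absurd h imp_no_fin_step
  intro B s s' Q δ h
  exact key _ B rfl s s' Q δ h
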